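/- Let N be an even natural number. The following map is a bijection from 'Z¹_N onto BP^{N/2}_{0,2}: each string 2a, …, 2a of ν (necessarily of even length) is replaced by a−1, a+1, …, a−1, a+1 of the same length if the string has even origin, and by a, a, …, a of the same length if it has odd origin; each string 2a+1, …, 2a+1 is replaced by a, a+1, a, a+1, … of the same length if it has even origin, and by a+1, a, a+1, a, … of the same length if it has odd origin. -/

import Mathlib

/-!
Let `σ i` be the parity of the sum of the first `i` parts of `ν` (positions are 0-based). If
`ν ∈ 'Z¹_N`, the parts before a string start `s` form whole strings, those of even parts having
even length, so `s ≡ σ s (mod 2)`. Hence odd parts sit at positions `i ≡ σ i`, strings of even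
parts start at positions `≡ σ`, and `σ = 0` beyond the last part because `N` is even; the
substitution then takes the closed form `ν i ↦ (ν i ± (σ i + σ (i + 1))) / 2`, with `+` at even
and `-` at odd positions. Conversely `σ` can be read off from the image `l`: at an even position
`i > 0` it records whether `l i = l (i - 1) + 2`, and at an odd position it is determined by its
neighbours and by whether `l (i - 1) = l i`. Doubling `l` back with these corrections inverts
the map; in the result the positions of an even part are matched in pairs `i, i + 1` with
`i ≡ σ i`, so each even part occurs an even number of times.
-/

/-- A sequence of naturals that is eventually zero. -/
def EventuallyZero (l : ℕ → ℕ) : Prop := ∃ N, ∀ m, N ≤ m → l m = 0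

/-- A bipartition: eventually zero, with `λ₁ ≥ λ₃ ≥ …` and `λ₂ ≥ λ₄ ≥ …`
(0-indexed: `l i = λ_{i+1}`). -/
def IsBipartition (l : ℕ → ℕ) : Prop :=
  EventuallyZero l ∧ ∀ i, l (i + 2) ≤ l i

/-- A partition: eventually zero and weakly decreasing. -/
def IsPartitionSeq (l : ℕ → ℕ) : Prop :=
  EventuallyZero l ∧ ∀ i, l (i + 1) ≤ l i

/-- `λ` has excess `(e, e')`: `λᵢ + e ≥ λᵢ₊₁` for odd (paper) `i`,
`λᵢ + e' ≥ λᵢ₊₁` for even (paper) `i`.  With 0-based indices, paper-odd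
positions are the even Lean indices. -/
def HasExcess (e e' : ℕ) (l : ℕ → ℕ) : Prop :=
  ∀ i, (Even i → l (i + 1) ≤ l i + e) ∧ (Odd i → l (i + 1) ≤ l i + e')

/-- The (finite) sum of an eventually zero sequence is `n`. -/
def SumsTo (l : ℕ → ℕ) (n : ℕ) : Prop :=
  ∃ N, (∀ m, N ≤ m → l m = 0) ∧ ∑ i ∈ Finset.range N, l i = n

/-- Starting index of the maximal run (string) of entries equal to `ν i`. -/
noncomputable def strStart (ν : ℕ → ℕ) (i : ℕ) : ℕ := sInf {j | ν j = ν i}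

/-- Length of the string of entries equal to `ν i`. -/
noncomputable def strLen (ν : ℕ → ℕ) (i : ℕ) : ℕ := {j | ν j = ν i}.ncard

/-- Every odd part occurs an even number of times. -/
def OddPartsEvenMult (ν : ℕ → ℕ) : Prop := ∀ c, Odd c → Even ({i | ν i = c}.ncard)

/-- Every even positive part occurs an even number of times. -/
def EvenPartsEvenMult (ν : ℕ → ℕ) : Prop :=
  ∀ c, 0 < c → Even c → Even ({i | ν i = c}.ncard)


/-- The substitution of 3.6(b).  A string has even origin iff its 1-based starting
index is even, i.e. its 0-based start strStart is odd. -/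
noncomputable def T5 (ν : ℕ → ℕ) : ℕ → ℕ := fun i =>
  if ν i = 0 then 0
  else if ν i % 2 = 0 then
    (if strStart ν i % 2 = 1 then
      (if (i - strStart ν i) % 2 = 0 then ν i / 2 - 1 else ν i / 2 + 1)
     else ν i / 2)
  else
    (if strStart ν i % 2 = 1 then
      (if (i - strStart ν i) % 2 = 0 then ν i / 2 else ν i / 2 + 1)
     else
      (if (i - strStart ν i) % 2 = 0 then ν i / 2 + 1 else ν i / 2))

open Finset

def Z1' (N : ℕ) : Set (ℕ → ℕ) :=
  {ν | IsPartitionSeq ν ∧ SumsTo ν N ∧ EvenPartsEvenMult ν}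

def BP02 (n : ℕ) : Set (ℕ → ℕ) :=
  {l | IsBipartition l ∧ SumsTo l n ∧ HasExcess 0 2 l}

section Basic

variable {l : ℕ → ℕ} {i n : ℕ}

lemma IsPartitionSeq.antitone (h : IsPartitionSeq l) : Antitone l :=
  antitone_nat_of_succ_le h.2

lemma HasExcess.le_of_even {e e' : ℕ} (h : HasExcess e e' l) (hi : i % 2 = 0) :
    l (i + 1) ≤ l i + e :=
  (h i).1 (Nat.even_iff.2 hi)

lemma HasExcess.le_of_odd {e e' : ℕ} (h : HasExcess e e' l) (hi : i % 2 = 1) :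
    l (i + 1) ≤ l i + e' :=
  (h i).2 (Nat.odd_iff.2 hi)

lemma SumsTo.sum_range_eq {K : ℕ} (h : SumsTo l n) (hK : ∀ m, K ≤ m → l m = 0) :
    ∑ i ∈ range K, l i = n := by
  obtain ⟨B, hB, rfl⟩ := h
  rw [← eventually_constant_sum hK (le_max_left K B),
    eventually_constant_sum hB (le_max_right K B)]

end Basic

def prefixParity (ν : ℕ → ℕ) (i : ℕ) : ℕ := (∑ j ∈ range i, ν j) % 2

section PrefixParity

variable {ν : ℕ → ℕ} {i n : ℕ}

@[simp]
lemma prefixParity_zero (ν : ℕ → ℕ) : prefixParity ν 0 = 0 := by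
  simp [prefixParity]

lemma prefixParity_succ (ν : ℕ → ℕ) (i : ℕ) :
    prefixParity ν (i + 1) = (prefixParity ν i + ν i) % 2 := by
  simp [prefixParity, sum_range_succ, Nat.add_mod]

lemma prefixParity_le_one (ν : ℕ → ℕ) (i : ℕ) : prefixParity ν i ≤ 1 :=
  Nat.le_of_lt_succ (Nat.mod_lt _ two_pos)

lemma prefixParity_eq_zero_of_apply_eq_zero (hν : Antitone ν) (hsum : SumsTo ν (2 * n))
    (hi : ν i = 0) : prefixParity ν i = 0 := by
  have : ∑ j ∈ range i, ν j = 2 * n :=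
    hsum.sum_range_eq fun m hm => Nat.eq_zero_of_le_zero (hi ▸ hν hm)
  simp [prefixParity, this]

lemma prefixParity_add_le (hν : Antitone ν) (hsum : SumsTo ν (2 * n)) (i : ℕ) :
    prefixParity ν i + prefixParity ν (i + 1) ≤ ν i := by
  have := prefixParity_succ ν i
  have := prefixParity_le_one ν i
  have := prefixParity_eq_zero_of_apply_eq_zero hν hsum (i := i)
  omega

end PrefixParity

section Strings

variable {ν : ℕ → ℕ} {i j : ℕ}

lemma strStart_le (ν : ℕ → ℕ) (i : ℕ) : strStart ν i ≤ i :=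
  Nat.sInf_le rfl

lemma apply_strStart (ν : ℕ → ℕ) (i : ℕ) : ν (strStart ν i) = ν i :=
  Nat.sInf_mem (⟨i, rfl⟩ : {j | ν j = ν i}.Nonempty)

lemma apply_lt_of_lt_strStart (hν : Antitone ν) (h : j < strStart ν i) : ν i < ν j :=
  lt_of_le_of_ne (apply_strStart ν i ▸ hν h.le)
    (Ne.symm (Nat.notMem_of_lt_sInf (s := {j | ν j = ν i}) h))

lemma apply_eq_of_strStart_le (hν : Antitone ν) (h₁ : strStart ν i ≤ j) (h₂ : j ≤ i) :
    ν j = ν i :=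
  le_antisymm (apply_strStart ν i ▸ hν h₁) (hν h₂)

lemma setOf_apply_eq_eq_Ico (hν : Antitone ν) (hi : ν (i + 1) < ν i) :
    {j | ν j = ν i} = Set.Ico (strStart ν i) (i + 1) := by
  ext j
  simp only [Set.mem_ofPred_eq, Set.mem_Ico]
  refine ⟨fun hj => ⟨not_lt.1 fun h => (apply_lt_of_lt_strStart hν h).ne' hj, ?_⟩,
    fun h => apply_eq_of_strStart_le hν h.1 (Nat.lt_succ_iff.1 h.2)⟩
  by_contra h
  have := hν (not_lt.1 h)
  omega

lemma prefixParity_of_strStart_le (hν : Antitone ν) (h₁ : strStart ν i ≤ j)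
    (h₂ : j ≤ i) : prefixParity ν j =
      (prefixParity ν (strStart ν i) + (j - strStart ν i) * (ν i % 2)) % 2 := by
  induction j, h₁ using Nat.le_induction with
  | base => simp [Nat.mod_eq_of_lt (Nat.lt_succ_of_le (prefixParity_le_one ν _))]
  | succ j hj ih =>
    rw [prefixParity_succ, ih (by omega), apply_eq_of_strStart_le hν hj (by omega),
      Nat.sub_add_comm hj, Nat.succ_mul]
    omega

end Strings

section EvenPartsEvenMult

variable {ν : ℕ → ℕ} {i : ℕ}

/-- A value taken before the string start `s` is taken only before `s`, so `∑ j < s, (ν j + 1)`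
splits into whole level sets: even values have even multiplicity, and odd values `c` contribute
multiples of the even number `c + 1`. -/
lemma strStart_mod_two (hν : Antitone ν) (hmult : EvenPartsEvenMult ν) (i : ℕ) :
    strStart ν i % 2 = prefixParity ν (strStart ν i) := by
  set s := strStart ν i
  have hfiber : ∀ c ∈ (range s).image ν, Even (#{j ∈ range s | ν j = c} • (c + 1)) := by
    intro c hc
    obtain ⟨k, hk, rfl⟩ := mem_image.1 hc
    have hlt : ν i < ν k := apply_lt_of_lt_strStart hν (mem_range.1 hk)
    rw [smul_eq_mul]
    rcases Nat.even_or_odd (ν k) with he | ho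
    · refine Even.mul_right ?_ _
      have hlevel : {j | ν j = ν k} = ↑({j ∈ range s | ν j = ν k}) := by
        ext j
        simp only [Set.mem_ofPred_eq, coe_filter, mem_range]
        refine ⟨fun hj => ⟨not_le.1 fun h => ?_, hj⟩, fun h => h.2⟩
        have := apply_strStart ν i ▸ hν h
        omega
      rw [← Set.ncard_coe_finset, ← hlevel]
      exact hmult _ (by omega) he
    · exact Even.mul_left ho.add_one _
  have hsum : Even (∑ j ∈ range s, (ν j + 1)) := by
    rw [sum_comp (fun c => c + 1) ν]
    exact even_sum _ hfiber
  rw [sum_add_distrib, sum_const, card_range, smul_eq_mul, mul_one, Nat.even_iff] at hsum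
  unfold prefixParity
  omega

lemma mod_two_eq_prefixParity_of_odd (hν : Antitone ν) (hmult : EvenPartsEvenMult ν)
    (hi : ν i % 2 = 1) : i % 2 = prefixParity ν i := by
  have hstring := prefixParity_of_strStart_le hν (strStart_le ν i) le_rfl
  rw [hi, mul_one] at hstring
  have := strStart_mod_two hν hmult i
  have := strStart_le ν i
  omega

lemma strStart_mod_two_of_even (hν : Antitone ν) (hmult : EvenPartsEvenMult ν)
    (hi : ν i % 2 = 0) : strStart ν i % 2 = prefixParity ν i := by
  have hstring := prefixParity_of_strStart_le hν (strStart_le ν i) le_rfl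
  rw [hi, mul_zero, add_zero, Nat.mod_eq_of_lt (Nat.lt_succ_of_le (prefixParity_le_one ν _))]
    at hstring
  rw [hstring, strStart_mod_two hν hmult]

/-- Otherwise the string of `ν i` would end at `i` and start at a position of the same parity,
so it would have odd length. -/
lemma apply_succ_eq_of_even (hν : Antitone ν) (hmult : EvenPartsEvenMult ν) (he : ν i % 2 = 0)
    (hpos : 0 < ν i) (hi : i % 2 = prefixParity ν i) : ν (i + 1) = ν i := by
  by_contra hne
  have hlt : ν (i + 1) < ν i := lt_of_le_of_ne (hν (Nat.le_succ i)) hne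
  have hlen := hmult (ν i) hpos (Nat.even_iff.2 he)
  rw [setOf_apply_eq_eq_Ico hν hlt, Set.ncard_Ico_nat, Nat.even_iff] at hlen
  have := strStart_mod_two_of_even hν hmult he
  have := strStart_le ν i
  omega

lemma even_ncard_of_succ_pairing {S : Set ℕ} (P : ℕ → Prop)
    (hsucc : ∀ i ∈ S, P i → i + 1 ∈ S ∧ ¬P (i + 1))
    (hpred : ∀ i ∈ S, ¬P i → ∃ j ∈ S, P j ∧ j + 1 = i) : Even S.ncard := by
  rcases S.finite_or_infinite with hS | hS
  · have himage : (· + 1) '' (S ∩ {i | P i}) = S \ {i | P i} := by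
      ext i
      constructor
      · rintro ⟨j, ⟨hjS, hjP⟩, rfl⟩
        exact hsucc j hjS hjP
      · rintro ⟨hiS, hiP⟩
        obtain ⟨j, hjS, hjP, rfl⟩ := hpred i hiS hiP
        exact ⟨j, ⟨hjS, hjP⟩, rfl⟩
    rw [← Set.ncard_inter_add_ncard_sdiff_eq_ncard S {i | P i} hS, ← himage,
      Set.ncard_image_of_injective _ (add_left_injective 1)]
    exact ⟨_, rfl⟩
  · rw [hS.ncard]
    exact ⟨0, rfl⟩

/-- Matches each position `i` of an even part with `i % 2 = prefixParity ν i` to `i + 1`, using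
that `prefixParity` does not change across an even part. -/
lemma evenPartsEvenMult_of_pairing
    (hsucc : ∀ i, ν i % 2 = 0 → 0 < ν i → i % 2 = prefixParity ν i → ν (i + 1) = ν i)
    (hpred : ∀ i, ν (i + 1) % 2 = 0 → 0 < ν (i + 1) →
      (i + 1) % 2 ≠ prefixParity ν (i + 1) → ν i = ν (i + 1)) :
    EvenPartsEvenMult ν := by
  intro c hc he
  rw [Nat.even_iff] at he
  refine even_ncard_of_succ_pairing (fun i => i % 2 = prefixParity ν i) ?_ ?_
  · intro i (hi : ν i = c) hP
    have := prefixParity_succ ν i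
    have := hsucc i (by omega) (by omega) hP
    exact ⟨show ν (i + 1) = c by omega, by omega⟩
  · intro i (hi : ν i = c) hP
    obtain ⟨k, rfl⟩ : ∃ k, i = k + 1 :=
      Nat.exists_eq_add_one.2 (Nat.pos_of_ne_zero (by rintro rfl; simp at hP))
    have := hpred k (by omega) (by omega) hP
    have := prefixParity_succ ν k
    have := prefixParity_le_one ν k
    exact ⟨k, show ν k = c by omega, by omega, rfl⟩

end EvenPartsEvenMult

section Halve

def halve (ν : ℕ → ℕ) (i : ℕ) : ℕ :=
  if i % 2 = 0 then (ν i + (prefixParity ν i + prefixParity ν (i + 1))) / 2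
  else (ν i - (prefixParity ν i + prefixParity ν (i + 1))) / 2

def unhalve (τ l : ℕ → ℕ) (i : ℕ) : ℕ :=
  if i % 2 = 0 then 2 * l i - (τ i + τ (i + 1)) else 2 * l i + (τ i + τ (i + 1))

variable {ν τ l : ℕ → ℕ} {i : ℕ}

lemma two_mul_halve_of_even (hi : i % 2 = 0) :
    2 * halve ν i = ν i + (prefixParity ν i + prefixParity ν (i + 1)) := by
  have := prefixParity_succ ν i
  have := prefixParity_le_one ν i
  simp only [halve, if_pos hi]
  omega

lemma two_mul_halve_of_odd (hi : i % 2 = 1) :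
    2 * halve ν i = ν i - (prefixParity ν i + prefixParity ν (i + 1)) := by
  have := prefixParity_succ ν i
  have := prefixParity_le_one ν i
  simp only [halve, if_neg (by omega : ¬i % 2 = 0)]
  omega

lemma unhalve_of_even (hi : i % 2 = 0) : unhalve τ l i = 2 * l i - (τ i + τ (i + 1)) :=
  if_pos hi

lemma unhalve_of_odd (hi : i % 2 = 1) : unhalve τ l i = 2 * l i + (τ i + τ (i + 1)) :=
  if_neg (by omega)

lemma halve_add_two_le (hν : Antitone ν) (i : ℕ) : halve ν (i + 2) ≤ halve ν i := by
  have : ν (i + 1) ≤ ν i := hν (by omega)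
  have : ν (i + 2) ≤ ν (i + 1) := hν (by omega)
  have := prefixParity_succ ν i
  have : prefixParity ν (i + 2) = _ := prefixParity_succ ν (i + 1)
  have : prefixParity ν (i + 3) = _ := prefixParity_succ ν (i + 2)
  have := prefixParity_le_one ν i
  rcases Nat.mod_two_eq_zero_or_one i with hi | hi
  · have := two_mul_halve_of_even (ν := ν) hi
    have := two_mul_halve_of_even (ν := ν) (i := i + 2) (by omega)
    -- `omega` treats `ν (i + 2 + 1)` and `ν (i + 3)` as different atoms
    simp only [Nat.add_assoc, Nat.reduceAdd] at *
    omega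
  · have := two_mul_halve_of_odd (ν := ν) hi
    have := two_mul_halve_of_odd (ν := ν) (i := i + 2) (by omega)
    simp only [Nat.add_assoc, Nat.reduceAdd] at *
    omega

lemma hasExcess_halve (hν : Antitone ν) : HasExcess 0 2 (halve ν) := by
  intro i
  have : ν (i + 1) ≤ ν i := hν (by omega)
  have : prefixParity ν (i + 2) = _ := prefixParity_succ ν (i + 1)
  have := prefixParity_le_one ν i
  have := prefixParity_le_one ν (i + 1)
  refine ⟨fun hi => ?_, fun hi => ?_⟩
  · rw [Nat.even_iff] at hi
    have := two_mul_halve_of_even (ν := ν) hi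
    have := two_mul_halve_of_odd (ν := ν) (i := i + 1) (by omega)
    simp only [Nat.add_assoc, Nat.reduceAdd] at *
    omega
  · rw [Nat.odd_iff] at hi
    have := two_mul_halve_of_odd (ν := ν) hi
    have := two_mul_halve_of_even (ν := ν) (i := i + 1) (by omega)
    simp only [Nat.add_assoc, Nat.reduceAdd] at *
    omega

lemma unhalve_halve (h : ∀ i, prefixParity ν i + prefixParity ν (i + 1) ≤ ν i) :
    unhalve (prefixParity ν) (halve ν) = ν := by
  funext i
  have := h i
  rcases Nat.mod_two_eq_zero_or_one i with hi | hi
  · rw [unhalve_of_even hi, two_mul_halve_of_even hi]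
    omega
  · rw [unhalve_of_odd hi, two_mul_halve_of_odd hi]
    omega

lemma prefixParity_unhalve (hτ : ∀ i, τ i ≤ 1) (hτ0 : τ 0 = 0)
    (hb : ∀ i, i % 2 = 0 → τ i + τ (i + 1) ≤ 2 * l i) :
    prefixParity (unhalve τ l) = τ := by
  funext i
  induction i with
  | zero => simp [hτ0]
  | succ i ih =>
    have := hτ i
    have := hτ (i + 1)
    have := hb i
    rw [prefixParity_succ, ih]
    unfold unhalve
    split_ifs <;> omega

lemma halve_unhalve (hτ : ∀ i, τ i ≤ 1) (hτ0 : τ 0 = 0)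
    (hb : ∀ i, i % 2 = 0 → τ i + τ (i + 1) ≤ 2 * l i) : halve (unhalve τ l) = l := by
  funext i
  have hσ := prefixParity_unhalve hτ hτ0 hb
  have := hb i
  rcases Nat.mod_two_eq_zero_or_one i with hi | hi
  · have := two_mul_halve_of_even (ν := unhalve τ l) hi
    rw [hσ, unhalve_of_even hi] at this
    omega
  · have := two_mul_halve_of_odd (ν := unhalve τ l) hi
    rw [hσ, unhalve_of_odd hi] at this
    omega

lemma sum_unhalve (hb : ∀ i, i % 2 = 0 → τ i + τ (i + 1) ≤ 2 * l i) (M : ℕ) :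
    ∑ i ∈ range (2 * M), unhalve τ l i + τ 0 =
      2 * ∑ i ∈ range (2 * M), l i + τ (2 * M) := by
  induction M with
  | zero => simp
  | succ M ih =>
    have := hb (2 * M) (by omega)
    rw [Nat.mul_succ, sum_range_succ, sum_range_succ, sum_range_succ, sum_range_succ,
      unhalve_of_even (by omega), unhalve_of_odd (by omega)]
    simp only [Nat.add_assoc, Nat.reduceAdd] at *
    omega

end Halve

section SaturationBits

/-- The prefix parities of the preimage of `l`, read off from where the excess bound
`l i ≤ l (i - 1) + 2` is attained. -/
def saturationBits (l : ℕ → ℕ) (i : ℕ) : ℕ :=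
  if i % 2 = 0 then
    if 0 < i ∧ l i = l (i - 1) + 2 then 1 else 0
  else
    if (1 < i ∧ l (i - 1) = l (i - 2) + 2) ∨ l (i + 1) = l i + 2 ∨ l (i - 1) ≠ l i then 1
    else 0

variable {l : ℕ → ℕ} {i B : ℕ}

@[simp]
lemma saturationBits_zero (l : ℕ → ℕ) : saturationBits l 0 = 0 := by
  simp [saturationBits]

lemma saturationBits_le_one (l : ℕ → ℕ) (i : ℕ) : saturationBits l i ≤ 1 := by
  unfold saturationBits
  split_ifs <;> omega

lemma saturationBits_succ_of_odd (hi : i % 2 = 1) :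
    saturationBits l (i + 1) = 1 ↔ l (i + 1) = l i + 2 := by
  simp [saturationBits, Nat.succ_mod_two_eq_zero_iff.2 hi]

lemma saturationBits_succ_of_even (hi : i % 2 = 0) :
    saturationBits l (i + 1) = 1 ↔
      saturationBits l i = 1 ∨ saturationBits l (i + 2) = 1 ∨ l i ≠ l (i + 1) := by
  have h₁ : (i + 2) % 2 = 0 := by omega
  have h₂ : ¬(i + 1) % 2 = 0 := by omega
  simp only [saturationBits, if_pos hi, if_pos h₁, if_neg h₂, Nat.add_sub_cancel,
    show i + 1 - 2 = i - 1 by omega, show i + 2 - 1 = i + 1 by omega, Nat.add_assoc,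
    Nat.reduceAdd]
  split_ifs <;> simp_all

lemma saturationBits_eq_zero (hB : ∀ m, B ≤ m → l m = 0) (hi : B + 2 ≤ i) :
    saturationBits l i = 0 := by
  simp [saturationBits, hB i (by omega), hB (i - 1) (by omega), hB (i - 2) (by omega),
    hB (i + 1) (by omega)]

lemma add_two_le_of_saturationBits (hl : ∀ i, l (i + 2) ≤ l i) (hi : i % 2 = 0)
    (h : saturationBits l i = 1) : l (i + 1) + 2 ≤ l i := by
  obtain ⟨k, rfl⟩ : ∃ k, i = k + 1 :=
    Nat.exists_eq_add_one.2 (Nat.pos_of_ne_zero (by rintro rfl; simp at h))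
  have := (saturationBits_succ_of_odd (l := l) (by omega)).1 h
  have := hl k
  simp only [Nat.add_assoc, Nat.reduceAdd] at *
  omega

lemma saturationBits_add_le (hl : ∀ i, l (i + 2) ≤ l i) (hexc : HasExcess 0 2 l)
    (hi : i % 2 = 0) : saturationBits l i + saturationBits l (i + 1) ≤ 2 * l i := by
  have := hexc.le_of_even hi
  have := hl i
  have := add_two_le_of_saturationBits hl hi
  have := saturationBits_succ_of_even (l := l) hi
  have := saturationBits_succ_of_odd (l := l) (i := i + 1) (by omega)
  have := saturationBits_le_one l i
  have := saturationBits_le_one l (i + 1)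
  simp only [Nat.add_assoc, Nat.reduceAdd] at *
  omega

lemma prefixParity_unhalve_saturationBits (hl : ∀ i, l (i + 2) ≤ l i)
    (hexc : HasExcess 0 2 l) : prefixParity (unhalve (saturationBits l) l) = saturationBits l :=
  prefixParity_unhalve (saturationBits_le_one l) (saturationBits_zero l)
    fun _ => saturationBits_add_le hl hexc

lemma halve_unhalve_saturationBits (hl : ∀ i, l (i + 2) ≤ l i) (hexc : HasExcess 0 2 l) :
    halve (unhalve (saturationBits l) l) = l :=
  halve_unhalve (saturationBits_le_one l) (saturationBits_zero l)
    fun _ => saturationBits_add_le hl hexc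

end SaturationBits

section Inverse

variable {l : ℕ → ℕ} {i n : ℕ}

lemma unhalve_saturationBits_succ_le (hl : ∀ i, l (i + 2) ≤ l i) (hexc : HasExcess 0 2 l)
    (i : ℕ) : unhalve (saturationBits l) l (i + 1) ≤ unhalve (saturationBits l) l i := by
  rcases Nat.mod_two_eq_zero_or_one i with hi | hi
  · have := hexc.le_of_even hi
    have := hl i
    have := add_two_le_of_saturationBits hl hi
    have := saturationBits_succ_of_even (l := l) hi
    have := saturationBits_succ_of_odd (l := l) (i := i + 1) (by omega)
    have := saturationBits_le_one l i
    have := saturationBits_le_one l (i + 1)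
    have := saturationBits_le_one l (i + 2)
    rw [unhalve_of_even hi, unhalve_of_odd (by omega)]
    simp only [Nat.add_assoc, Nat.reduceAdd] at *
    omega
  · obtain ⟨k, rfl⟩ : ∃ k, i = k + 1 := ⟨i - 1, by omega⟩
    have hk : k % 2 = 0 := by omega
    have := hl k
    have := hl (k + 1)
    have := hexc.le_of_even hk
    have := hexc.le_of_odd hi
    have := hexc.le_of_even (i := k + 2) (by omega)
    have := saturationBits_succ_of_even (l := l) hk
    have := saturationBits_succ_of_odd (l := l) hi
    have := saturationBits_succ_of_even (l := l) (i := k + 2) (by omega)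
    have := saturationBits_le_one l k
    have := saturationBits_le_one l (k + 1)
    have := saturationBits_le_one l (k + 2)
    have := saturationBits_le_one l (k + 3)
    have := saturationBits_le_one l (k + 4)
    rw [unhalve_of_even (i := k + 1 + 1) (by omega), unhalve_of_odd hi]
    simp only [Nat.add_assoc, Nat.reduceAdd] at *
    omega

lemma unhalve_saturationBits_succ_eq (he : unhalve (saturationBits l) l i % 2 = 0)
    (hpos : 0 < unhalve (saturationBits l) l i) (hi : i % 2 = saturationBits l i) :
    unhalve (saturationBits l) l (i + 1) = unhalve (saturationBits l) l i := by
  rcases Nat.mod_two_eq_zero_or_one i with hi' | hi'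
  · have := saturationBits_succ_of_even (l := l) hi'
    have := saturationBits_succ_of_odd (l := l) (i := i + 1) (by omega)
    have := saturationBits_le_one l (i + 1)
    have := saturationBits_le_one l (i + 2)
    rw [unhalve_of_even hi'] at he hpos ⊢
    rw [unhalve_of_odd (i := i + 1) (by omega)]
    simp only [Nat.add_assoc, Nat.reduceAdd] at *
    omega
  · obtain ⟨k, rfl⟩ : ∃ k, i = k + 1 := ⟨i - 1, by omega⟩
    have := saturationBits_succ_of_odd (l := l) hi'
    have := saturationBits_succ_of_even (l := l) (i := k + 2) (by omega)
    have := saturationBits_le_one l (k + 2)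
    have := saturationBits_le_one l (k + 3)
    rw [unhalve_of_odd hi'] at he ⊢
    rw [unhalve_of_even (i := k + 1 + 1) (by omega)]
    simp only [Nat.add_assoc, Nat.reduceAdd] at *
    omega

lemma unhalve_saturationBits_eq_succ (he : unhalve (saturationBits l) l (i + 1) % 2 = 0)
    (hi : (i + 1) % 2 ≠ saturationBits l (i + 1)) :
    unhalve (saturationBits l) l i = unhalve (saturationBits l) l (i + 1) := by
  rcases Nat.mod_two_eq_zero_or_one i with hi' | hi'
  · have := saturationBits_succ_of_even (l := l) hi'
    have := saturationBits_le_one l i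
    have := saturationBits_le_one l (i + 1)
    have := saturationBits_le_one l (i + 2)
    rw [unhalve_of_odd (i := i + 1) (by omega)] at he ⊢
    rw [unhalve_of_even hi']
    simp only [Nat.add_assoc, Nat.reduceAdd] at *
    omega
  · obtain ⟨k, rfl⟩ : ∃ k, i = k + 1 := ⟨i - 1, by omega⟩
    have := saturationBits_succ_of_even (l := l) (i := k) (by omega)
    have := saturationBits_succ_of_odd (l := l) hi'
    have := saturationBits_succ_of_even (l := l) (i := k + 2) (by omega)
    have := saturationBits_le_one l (k + 1)
    have := saturationBits_le_one l (k + 2)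
    have := saturationBits_le_one l (k + 3)
    rw [unhalve_of_even (i := k + 1 + 1) (by omega)] at he ⊢
    rw [unhalve_of_odd hi']
    simp only [Nat.add_assoc, Nat.reduceAdd] at *
    omega

lemma unhalve_saturationBits_mem (hl : l ∈ BP02 n) :
    unhalve (saturationBits l) l ∈ Z1' (2 * n) := by
  obtain ⟨⟨⟨B, hB⟩, hl⟩, hsum, hexc⟩ := hl
  have hσ := prefixParity_unhalve_saturationBits hl hexc
  have hzero : ∀ m, B + 2 ≤ m → unhalve (saturationBits l) l m = 0 := by
    intro m hm
    simp [unhalve, hB m (by omega), saturationBits_eq_zero hB hm,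
      saturationBits_eq_zero hB (by omega : B + 2 ≤ m + 1)]
  refine ⟨⟨⟨B + 2, hzero⟩, unhalve_saturationBits_succ_le hl hexc⟩,
    ⟨2 * (B + 2), fun m hm => hzero m (by omega), ?_⟩,
    evenPartsEvenMult_of_pairing
      (fun _ he hpos hi => unhalve_saturationBits_succ_eq he hpos (hσ ▸ hi))
      (fun _ he _ hi => unhalve_saturationBits_eq_succ he (hσ ▸ hi))⟩
  have := sum_unhalve (fun _ => saturationBits_add_le hl hexc) (B + 2)
  rw [saturationBits_zero, saturationBits_eq_zero hB (by omega),
    hsum.sum_range_eq fun m hm => hB m (by omega)] at this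
  omega

end Inverse

section Forward

variable {ν : ℕ → ℕ} {i n : ℕ}

lemma T5_eq_halve (hν : ν ∈ Z1' (2 * n)) : T5 ν = halve ν := by
  obtain ⟨hpart, hsum, hmult⟩ := hν
  funext i
  have := strStart_le ν i
  have := strStart_mod_two_of_even hpart.antitone hmult (i := i)
  have := prefixParity_eq_zero_of_apply_eq_zero hpart.antitone hsum (i := i)
  have := prefixParity_succ ν i
  have := prefixParity_le_one ν i
  unfold T5 halve
  split_ifs <;> omega

lemma halve_mem_BP02 (hν : Antitone ν) (hsum : SumsTo ν (2 * n)) : halve ν ∈ BP02 n := by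
  obtain ⟨B, hB, -⟩ := id hsum
  have hzero : ∀ m, B ≤ m → halve ν m = 0 := fun m hm => by
    simp [halve, hB m hm, prefixParity_eq_zero_of_apply_eq_zero hν hsum (hB m hm),
      prefixParity_eq_zero_of_apply_eq_zero hν hsum (hB (m + 1) (by omega))]
  have hb : ∀ i, i % 2 = 0 →
      prefixParity ν i + prefixParity ν (i + 1) ≤ 2 * halve ν i := fun i hi => by
    rw [two_mul_halve_of_even hi]
    omega
  refine ⟨⟨⟨B, hzero⟩, halve_add_two_le hν⟩,
    ⟨2 * B, fun m hm => hzero m (by omega), ?_⟩, hasExcess_halve hν⟩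
  have := sum_unhalve hb B
  rw [unhalve_halve (prefixParity_add_le hν hsum),
    hsum.sum_range_eq fun m hm => hB m (by omega), prefixParity_zero,
    prefixParity_eq_zero_of_apply_eq_zero hν hsum (hB (2 * B) (by omega))] at this
  omega

lemma saturationBits_halve_of_even (hν : ν ∈ Z1' (2 * n)) (hi : i % 2 = 0) :
    saturationBits (halve ν) i = prefixParity ν i := by
  obtain ⟨hpart, hsum, hmult⟩ := hν
  have hanti := hpart.antitone
  obtain _ | k := i
  · simp
  have hk : k % 2 = 1 := by omega
  have := mod_two_eq_prefixParity_of_odd hanti hmult (i := k)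
  have := mod_two_eq_prefixParity_of_odd hanti hmult (i := k + 1)
  have := apply_succ_eq_of_even hanti hmult (i := k)
  have := prefixParity_eq_zero_of_apply_eq_zero hanti hsum (i := k + 1)
  have : ν (k + 1) ≤ ν k := hanti (by omega)
  have := prefixParity_succ ν k
  have : prefixParity ν (k + 2) = _ := prefixParity_succ ν (k + 1)
  have := prefixParity_le_one ν k
  have := prefixParity_add_le hanti hsum k
  have := two_mul_halve_of_odd (ν := ν) hk
  have := two_mul_halve_of_even (ν := ν) (i := k + 1) (by omega)
  have := saturationBits_succ_of_odd (l := halve ν) hk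
  have := saturationBits_le_one (halve ν) (k + 1)
  simp only [Nat.add_assoc, Nat.reduceAdd] at *
  omega

lemma saturationBits_halve (hν : ν ∈ Z1' (2 * n)) :
    saturationBits (halve ν) = prefixParity ν := by
  funext i
  rcases Nat.mod_two_eq_zero_or_one i with hi | hi
  · exact saturationBits_halve_of_even hν hi
  obtain ⟨k, rfl⟩ : ∃ k, i = k + 1 := ⟨i - 1, by omega⟩
  have hk : k % 2 = 0 := by omega
  have hbit := saturationBits_succ_of_even (l := halve ν) hk
  rw [saturationBits_halve_of_even hν hk,
    saturationBits_halve_of_even hν (i := k + 2) (by omega)] at hbit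
  obtain ⟨hpart, hsum, hmult⟩ := hν
  have hanti := hpart.antitone
  have := mod_two_eq_prefixParity_of_odd hanti hmult (i := k)
  have := mod_two_eq_prefixParity_of_odd hanti hmult (i := k + 1)
  have := apply_succ_eq_of_even hanti hmult (i := k)
  have := prefixParity_eq_zero_of_apply_eq_zero hanti hsum (i := k)
  have : ν (k + 1) ≤ ν k := hanti (by omega)
  have := prefixParity_succ ν k
  have : prefixParity ν (k + 2) = _ := prefixParity_succ ν (k + 1)
  have := prefixParity_le_one ν k
  have := prefixParity_le_one ν (k + 1)
  have := prefixParity_add_le hanti hsum (k + 1)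
  have := two_mul_halve_of_even (ν := ν) hk
  have := two_mul_halve_of_odd (ν := ν) hi
  have := saturationBits_le_one (halve ν) (k + 1)
  simp only [Nat.add_assoc, Nat.reduceAdd] at *
  omega

lemma unhalve_saturationBits_halve (hν : ν ∈ Z1' (2 * n)) :
    unhalve (saturationBits (halve ν)) (halve ν) = ν := by
  rw [saturationBits_halve hν, unhalve_halve (prefixParity_add_le hν.1.antitone hν.2.1)]

end Forward

/-- 3.6(b): for even N, the substitution is a bijection from 'Z¹_N onto BP^{N/2}_{0,2}. -/
theorem Z1'_bij_BP02 (N : ℕ) (hN : Even N) :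
    Set.BijOn T5
      {ν | IsPartitionSeq ν ∧ SumsTo ν N ∧ EvenPartsEvenMult ν}
      {l | IsBipartition l ∧ SumsTo l (N / 2) ∧ HasExcess 0 2 l} := by
  obtain ⟨n, rfl⟩ := hN.two_dvd
  change Set.BijOn T5 (Z1' (2 * n)) (BP02 (2 * n / 2))
  rw [Nat.mul_div_cancel_left n two_pos]
  refine Set.InvOn.bijOn (f' := fun l => unhalve (saturationBits l) l)
    ⟨fun ν hν => ?_, fun l hl => ?_⟩ (fun ν hν => ?_)
    (fun _ hl => unhalve_saturationBits_mem hl)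
  · show unhalve (saturationBits (T5 ν)) (T5 ν) = ν
    rw [T5_eq_halve hν, unhalve_saturationBits_halve hν]
  · obtain ⟨⟨-, hl2⟩, -, hexc⟩ := id hl
    show T5 (unhalve (saturationBits l) l) = l
    rw [T5_eq_halve (unhalve_saturationBits_mem hl), halve_unhalve_saturationBits hl2 hexc]
  · show T5 ν ∈ BP02 n
    rw [T5_eq_halve hν]
    exact halve_mem_BP02 hν.1.antitone hν.2.1
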